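/- For an obtuse triangle, every interior point q has the property that for at least two of the three sides, the orthogonal projection of q onto the line containing that side lies on the side itself. -/

import Mathlib

/-- `FootOnSide P₁ P₂ q` says: the foot of the perpendicular from `q` to the
line through `P₁, P₂` (i.e. the point of that line closest to `q`) lies on the
closed segment `[P₁, P₂]`. -/
def FootOnSide (P₁ P₂ q : EuclideanSpace ℝ (Fin 2)) : Prop :=
  ∀ p ∈ (affineSpan ℝ {P₁, P₂} : Set (EuclideanSpace ℝ (Fin 2))),
    (∀ r ∈ (affineSpan ℝ {P₁, P₂} : Set (EuclideanSpace ℝ (Fin 2))),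
      dist q p ≤ dist q r) →
    p ∈ segment ℝ P₁ P₂

/-!
For a segment `[P₁, P₂]`, the foot of the perpendicular from `q` lies on the segment exactly
when `0 ≤ ⟪q - P₁, P₂ - P₁⟫` and `0 ≤ ⟪q - P₂, P₁ - P₂⟫`, i.e. when `q` lies in two
half-planes; a half-plane contains the triangle as soon as it contains its three vertices.

If the angle at `A` is not acute, the angles at `B` and `C` are acute, so the triangle lies in
the four half-planes based at `B` and `C`. This gives the side `BC`, and the conditions at `B`
and `C` for the sides `AB` and `AC`. At `A`, the vector `q - A` cannot make an obtuse angle with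
both `B - A` and `C - A`: otherwise the half-plane `⟪p - A, q - A⟫ ≤ 0` would contain the
triangle and hence `q`, forcing `q = A`.
-/

open scoped RealInnerProductSpace

section InnerProductSpace

variable {V : Type*} [NormedAddCommGroup V] [InnerProductSpace ℝ V]

theorem inner_sub_nonpos_of_pi_div_two_le_angle {A B C : V}
    (h : Real.pi / 2 ≤ EuclideanGeometry.angle A B C) : ⟪A - B, C - B⟫ ≤ 0 := by
  rw [← InnerProductGeometry.cos_angle_mul_norm_mul_norm]
  refine mul_nonpos_of_nonpos_of_nonneg (Real.cos_nonpos_of_pi_div_two_le_of_le h ?_)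
    (by positivity)
  linarith [InnerProductGeometry.angle_le_pi (A - B) (C - B), Real.pi_pos]

theorem inner_sub_nonneg_of_inner_sub_nonpos {A B C : V} (hA : ⟪B - A, C - A⟫ ≤ 0) :
    0 ≤ ⟪A - B, C - B⟫ := by
  have hexpand : ⟪A - B, C - B⟫ = ⟪B - A, B - A⟫ - ⟪B - A, C - A⟫ := by
    rw [← neg_sub B A, ← sub_sub_sub_cancel_right C B A, inner_neg_left, inner_sub_right]
    ring
  rw [hexpand]
  linarith [real_inner_self_nonneg (x := B - A)]

theorem inner_sub_nonneg_of_mem_convexHull {s : Set V} {o v q : V}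
    (hs : ∀ p ∈ s, 0 ≤ ⟪p - o, v⟫) (hq : q ∈ convexHull ℝ s) : 0 ≤ ⟪q - o, v⟫ := by
  have hlin : IsLinearMap ℝ fun p : V => ⟪p, v⟫ :=
    ⟨fun x y => inner_add_left x y v, fun c x => real_inner_smul_left x v c⟩
  have hsub : s ⊆ {p | ⟪o, v⟫ ≤ ⟪p, v⟫} := fun p hp => by
    simpa [inner_sub_left] using hs p hp
  simpa [inner_sub_left] using convexHull_min hsub (convex_halfSpace_ge hlin _) hq

theorem mem_segment_of_inner_sub_eq_zero {P₁ P₂ p q : V} (hp : p ∈ line[ℝ, P₁, P₂])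
    (hperp : ⟪q - p, P₂ - P₁⟫ = 0) (h₁ : 0 ≤ ⟪q - P₁, P₂ - P₁⟫)
    (h₂ : 0 ≤ ⟪q - P₂, P₁ - P₂⟫) : p ∈ segment ℝ P₁ P₂ := by
  obtain ⟨t, rfl⟩ := mem_affineSpan_pair_iff_exists_lineMap_eq.mp hp
  rcases eq_or_ne P₁ P₂ with rfl | hne
  · simp
  set v := P₂ - P₁
  have hv : 0 < ⟪v, v⟫ := real_inner_self_pos.mpr (sub_ne_zero.mpr hne.symm)
  have hline : AffineMap.lineMap P₁ P₂ t = P₁ + t • v := by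
    rw [AffineMap.lineMap_apply_module', add_comm]
  rw [hline] at hperp ⊢
  have e₁ : ⟪q - P₁, v⟫ = t * ⟪v, v⟫ := by
    rw [← sub_eq_zero, ← hperp, ← real_inner_smul_left, ← inner_sub_left]
    congr 1; abel
  have e₂ : ⟪q - P₂, P₁ - P₂⟫ = (1 - t) * ⟪v, v⟫ := by
    rw [← neg_sub P₂ P₁, inner_neg_right, ← sub_sub_sub_cancel_right q P₂ P₁, inner_sub_left, e₁]
    ring
  rw [segment_eq_image_lineMap]
  refine ⟨t, ⟨?_, ?_⟩, hline⟩
  · nlinarith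
  · nlinarith

theorem inner_sub_nonneg_of_mem_convexHull_of_inner_nonneg {A B C q : V}
    (hB : 0 ≤ ⟪A - B, C - B⟫) (hq : q ∈ convexHull ℝ {A, B, C}) :
    0 ≤ ⟪q - B, A - B⟫ ∧ 0 ≤ ⟪q - B, C - B⟫ := by
  constructor <;> refine inner_sub_nonneg_of_mem_convexHull ?_ hq <;>
    simp only [Set.mem_insert_iff, Set.mem_singleton_iff, forall_eq_or_imp, forall_eq,
      sub_self, inner_zero_left, le_refl, real_inner_self_nonneg, true_and, and_true]
  · rwa [real_inner_comm]
  · exact hB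

theorem inner_sub_nonneg_or_of_mem_convexHull {A B C q : V} (hq : q ∈ convexHull ℝ {A, B, C}) :
    0 ≤ ⟪q - A, B - A⟫ ∨ 0 ≤ ⟪q - A, C - A⟫ := by
  by_contra! h
  have hself : 0 ≤ ⟪q - A, A - q⟫ := by
    refine inner_sub_nonneg_of_mem_convexHull ?_ hq
    simp only [Set.mem_insert_iff, Set.mem_singleton_iff, forall_eq_or_imp, forall_eq,
      sub_self, inner_zero_left, le_refl, true_and]
    rw [← neg_sub q A, inner_neg_right, inner_neg_right, real_inner_comm (q - A) (B - A),
      real_inner_comm (q - A) (C - A)]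
    exact ⟨by linarith [h.1], by linarith [h.2]⟩
  rw [← neg_sub q A, inner_neg_right, neg_nonneg] at hself
  have hqA : q - A = 0 := real_inner_self_nonpos.mp hself
  simp [hqA] at h

end InnerProductSpace

theorem footOnSide_comm {P₁ P₂ q : EuclideanSpace ℝ (Fin 2)} :
    FootOnSide P₁ P₂ q ↔ FootOnSide P₂ P₁ q := by
  simp only [FootOnSide, Set.pair_comm P₁ P₂, segment_symm ℝ P₁ P₂]

theorem footOnSide_of_inner_sub_nonneg {P₁ P₂ q : EuclideanSpace ℝ (Fin 2)}
    (h₁ : 0 ≤ ⟪q - P₁, P₂ - P₁⟫) (h₂ : 0 ≤ ⟪q - P₂, P₁ - P₂⟫) : FootOnSide P₁ P₂ q := by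
  intro p hp hmin
  set s := line[ℝ, P₁, P₂]
  have : Nonempty s := ⟨⟨P₁, left_mem_affineSpan_pair ℝ P₁ P₂⟩⟩
  have hproj : (EuclideanGeometry.orthogonalProjection s q : EuclideanSpace ℝ (Fin 2)) = p := by
    refine (EuclideanGeometry.dist_orthogonalProjection_eq_dist_iff_eq_of_mem hp).mp
      (le_antisymm ?_ (hmin _ (EuclideanGeometry.orthogonalProjection_mem q)))
    rw [EuclideanGeometry.dist_orthogonalProjection_eq_infDist]
    exact Metric.infDist_le_dist_of_mem hp
  have hperp : ⟪q - p, P₂ - P₁⟫ = 0 := by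
    rw [← hproj]
    exact Submodule.inner_left_of_mem_orthogonal
      (AffineSubspace.vsub_mem_direction (right_mem_affineSpan_pair ℝ P₁ P₂)
        (left_mem_affineSpan_pair ℝ P₁ P₂))
      (EuclideanGeometry.vsub_orthogonalProjection_mem_direction_orthogonal s q)
  exact mem_segment_of_inner_sub_eq_zero hp hperp h₁ h₂

theorem two_feet_on_sides_of_inner_sub_nonpos {A B C q : EuclideanSpace ℝ (Fin 2)}
    (hA : ⟪B - A, C - A⟫ ≤ 0) (hq : q ∈ convexHull ℝ {A, B, C}) :
    FootOnSide B C q ∧ (FootOnSide A B q ∨ FootOnSide A C q) := by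
  obtain ⟨hBA, hBC⟩ :=
    inner_sub_nonneg_of_mem_convexHull_of_inner_nonneg (inner_sub_nonneg_of_inner_sub_nonpos hA) hq
  obtain ⟨hCA, hCB⟩ := inner_sub_nonneg_of_mem_convexHull_of_inner_nonneg
    (inner_sub_nonneg_of_inner_sub_nonpos (by rwa [real_inner_comm]))
    (by rwa [Set.pair_comm] : q ∈ convexHull ℝ {A, C, B})
  refine ⟨footOnSide_of_inner_sub_nonneg hBC hCB, ?_⟩
  rcases inner_sub_nonneg_or_of_mem_convexHull hq with hAB | hAC
  · exact .inl (footOnSide_of_inner_sub_nonneg hAB hBA)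
  · exact .inr (footOnSide_of_inner_sub_nonneg hAC hCA)

theorem obtuse_triangle_two_feet_on_sides_general
    (A B C : EuclideanSpace ℝ (Fin 2))
    (hobt : Real.pi / 2 < EuclideanGeometry.angle B A C ∨
      Real.pi / 2 < EuclideanGeometry.angle A B C ∨
      Real.pi / 2 < EuclideanGeometry.angle A C B)
    (q : EuclideanSpace ℝ (Fin 2))
    (hq : q ∈ interior (convexHull ℝ ({A, B, C} : Set _))) :
    (FootOnSide A B q ∧ FootOnSide B C q) ∨
    (FootOnSide A B q ∧ FootOnSide A C q) ∨
    (FootOnSide B C q ∧ FootOnSide A C q) := by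
  replace hq : q ∈ convexHull ℝ {A, B, C} := interior_subset hq
  rcases hobt with hA | hB | hC
  · obtain ⟨hBC, hAB | hAC⟩ :=
      two_feet_on_sides_of_inner_sub_nonpos (inner_sub_nonpos_of_pi_div_two_le_angle hA.le) hq
    · exact .inl ⟨hAB, hBC⟩
    · exact .inr (.inr ⟨hBC, hAC⟩)
  · obtain ⟨hAC, hBA | hBC⟩ :=
      two_feet_on_sides_of_inner_sub_nonpos (inner_sub_nonpos_of_pi_div_two_le_angle hB.le)
        (by rwa [Set.insert_comm B A] : q ∈ convexHull ℝ {B, A, C})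
    · exact .inr (.inl ⟨footOnSide_comm.mp hBA, hAC⟩)
    · exact .inr (.inr ⟨hBC, hAC⟩)
  · obtain ⟨hAB, hCA | hCB⟩ :=
      two_feet_on_sides_of_inner_sub_nonpos (inner_sub_nonpos_of_pi_div_two_le_angle hC.le)
        (by rwa [Set.insert_comm C A, Set.pair_comm C B] : q ∈ convexHull ℝ {C, A, B})
    · exact .inr (.inl ⟨hAB, footOnSide_comm.mp hCA⟩)
    · exact .inl ⟨hAB, footOnSide_comm.mp hCB⟩

/-- For an obtuse triangle, every interior point `q` has the property that for
at least two of the three sides, the orthogonal projection of `q` onto the line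
containing that side lies on the side itself. -/
theorem obtuse_triangle_two_feet_on_sides
    (A B C : EuclideanSpace ℝ (Fin 2)) (hABC : ¬ Collinear ℝ ({A, B, C} : Set _))
    (hobt : Real.pi / 2 < EuclideanGeometry.angle B A C ∨
      Real.pi / 2 < EuclideanGeometry.angle A B C ∨
      Real.pi / 2 < EuclideanGeometry.angle A C B)
    (q : EuclideanSpace ℝ (Fin 2))
    (hq : q ∈ interior (convexHull ℝ ({A, B, C} : Set _))) :
    (FootOnSide A B q ∧ FootOnSide B C q) ∨
    (FootOnSide A B q ∧ FootOnSide A C q) ∨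
    (FootOnSide B C q ∧ FootOnSide A C q) :=
  obtuse_triangle_two_feet_on_sides_general A B C hobt q hq
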